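/- arXiv:2408.15749 — 3 statements merged into one kernel-verified Lean document; each statement's English description precedes it below -/
import Mathlib

section
/- For x ∈ ℝ set x⁺ := (|x|+x)/2 and x⁻ := (|x|−x)/2. Given positive constants c_ev, c_cd, c_cn, c_ac, c_cr, R_d, R_v, q_cn, q_ac and a real number q_vs, define for T, q_v, q_c, q_r ∈ ℝ: S_ev⁺ := c_ev·T⁺·((R_d + R_v·q_v⁺)/(1 + q_v⁺ + q_c⁺ + q_r⁺))·(q_vs − q_v⁺)⁺·q_r⁺; S_cd⁺ := c_cd·(q_v⁺ − q_vs)·q_c⁺ + c_cn·(q_v − q_vs)⁺·q_cn. Suppose q_vs ≥ 0 and q_vs·T⁻ = 0. Then (S_ev⁺ − S_cd⁺)·T⁻ ≤ 0. -/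
/-- The non-negative part of `x`: `x⁺ := (|x| + x)/2`. -/
noncomputable def posPart' (x : ℝ) : ℝ := (|x| + x) / 2

/-- The non-positive part of `x`: `x⁻ := (|x| − x)/2`. -/
noncomputable def negPart' (x : ℝ) : ℝ := (|x| - x) / 2

lemma posPart'_nonneg (x : ℝ) : 0 ≤ posPart' x := by
  unfold posPart'; have := abs_nonneg x; have := neg_abs_le x; linarith

lemma negPart'_nonneg (x : ℝ) : 0 ≤ negPart' x := by
  unfold negPart'; have := le_abs_self x; linarith

lemma posPart'_eq_zero_of_neg (x : ℝ) (h : 0 < negPart' x) : posPart' x = 0 := by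
  unfold negPart' at h; unfold posPart'
  rcases abs_cases x with ⟨h1, h2⟩ | ⟨h1, h2⟩ <;> linarith

/-- Pointwise sign inequality `(S_ev⁺ − S_cd⁺)·T⁻ ≤ 0` under `q_vs ≥ 0` and the
compatibility condition `q_vs·T⁻ = 0`, used to prove non-negativity of the
temperature. -/
theorem temperature_source_sign
    (c_ev c_cd c_cn c_ac c_cr R_d R_v q_cn q_ac : ℝ)
    (hev : 0 < c_ev) (hcd : 0 < c_cd) (hcn : 0 < c_cn) (hac : 0 < c_ac)
    (hcr : 0 < c_cr) (hRd : 0 < R_d) (hRv : 0 < R_v) (hqcn : 0 < q_cn)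
    (hqac : 0 < q_ac)
    (q_vs T q_v q_c q_r : ℝ) (hqvs : 0 ≤ q_vs) (hcomp : q_vs * negPart' T = 0) :
    (c_ev * posPart' T *
        ((R_d + R_v * posPart' q_v) /
          (1 + posPart' q_v + posPart' q_c + posPart' q_r)) *
        posPart' (q_vs - posPart' q_v) * posPart' q_r
      - (c_cd * (posPart' q_v - q_vs) * posPart' q_c
          + c_cn * posPart' (q_v - q_vs) * q_cn)) * negPart' T ≤ 0 := by
  rcases eq_or_lt_of_le (negPart'_nonneg T) with h | h
  · rw [← h, mul_zero]
  · have hTp : posPart' T = 0 := posPart'_eq_zero_of_neg T h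
    have hq : q_vs = 0 := by
      rcases mul_eq_zero.mp hcomp with h0 | h0
      · exact h0
      · exact absurd h0 (ne_of_gt h)
    subst hq
    rw [hTp]
    have h1 : 0 ≤ c_cd * (posPart' q_v - 0) * posPart' q_c := by
      have h3 := posPart'_nonneg q_v
      exact mul_nonneg (mul_nonneg hcd.le (by linarith)) (posPart'_nonneg q_c)
    have h2 : 0 ≤ c_cn * posPart' (q_v - 0) * q_cn :=
      mul_nonneg (mul_nonneg hcn.le (posPart'_nonneg _)) hqcn.le
    nlinarith [h.le, mul_nonneg (add_nonneg h1 h2) h.le]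
end

section
/- For x ∈ ℝ set x⁺ := (|x|+x)/2 and x⁻ := (|x|−x)/2. Given positive constants c_ev, c_cd, c_cn, c_ac, c_cr, R_d, R_v, q_cn, q_ac and a real number q_vs, define for T, q_v, q_c, q_r ∈ ℝ: S_ev⁺ := c_ev·T⁺·((R_d + R_v·q_v⁺)/(1 + q_v⁺ + q_c⁺ + q_r⁺))·(q_vs − q_v⁺)⁺·q_r⁺; S_cd⁺ := c_cd·(q_v⁺ − q_vs)·q_c⁺ + c_cn·(q_v − q_vs)⁺·q_cn. Suppose q_vs ≥ 0. Then (S_ev⁺ − S_cd⁺)·q_v⁻ ≥ 0. -/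
lemma posPart'_of_nonpos {x : ℝ} (h : x ≤ 0) : posPart' x = 0 := by
  unfold posPart'; rw [abs_of_nonpos h]; ring

lemma posPart'_of_nonneg {x : ℝ} (h : 0 ≤ x) : posPart' x = x := by
  unfold posPart'; rw [abs_of_nonneg h]; ring

lemma negPart'_of_nonneg {x : ℝ} (h : 0 ≤ x) : negPart' x = 0 := by
  unfold negPart'; rw [abs_of_nonneg h]; ring

lemma negPart'_of_nonpos {x : ℝ} (h : x ≤ 0) : negPart' x = -x := by
  unfold negPart'; rw [abs_of_nonpos h]; ring

/-- Pointwise sign inequality `(S_ev⁺ − S_cd⁺)·q_v⁻ ≥ 0` under `q_vs ≥ 0`, used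
to prove non-negativity of the vapor mixing ratio. -/
theorem vapor_source_sign
    (c_ev c_cd c_cn c_ac c_cr R_d R_v q_cn q_ac : ℝ)
    (hev : 0 < c_ev) (hcd : 0 < c_cd) (hcn : 0 < c_cn) (hac : 0 < c_ac)
    (hcr : 0 < c_cr) (hRd : 0 < R_d) (hRv : 0 < R_v) (hqcn : 0 < q_cn)
    (hqac : 0 < q_ac)
    (q_vs T q_v q_c q_r : ℝ) (hqvs : 0 ≤ q_vs) :
    0 ≤ (c_ev * posPart' T *
          ((R_d + R_v * posPart' q_v) /
            (1 + posPart' q_v + posPart' q_c + posPart' q_r)) *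
          posPart' (q_vs - posPart' q_v) * posPart' q_r
        - (c_cd * (posPart' q_v - q_vs) * posPart' q_c
            + c_cn * posPart' (q_v - q_vs) * q_cn)) * negPart' q_v := by
  rcases le_or_gt 0 q_v with h | h
  · rw [negPart'_of_nonneg h, mul_zero]
  · have hv : q_v ≤ 0 := h.le
    rw [posPart'_of_nonpos hv, posPart'_of_nonpos (by linarith : q_v - q_vs ≤ 0),
      negPart'_of_nonpos hv]
    have hden : 0 < 1 + 0 + posPart' q_c + posPart' q_r := by
      have := posPart'_nonneg q_c; have := posPart'_nonneg q_r; linarith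
    apply mul_nonneg _ (by linarith)
    have h1 : 0 ≤ c_ev * posPart' T * ((R_d + R_v * 0) /
        (1 + 0 + posPart' q_c + posPart' q_r)) * posPart' (q_vs - 0) * posPart' q_r := by
      have := posPart'_nonneg T
      have := posPart'_nonneg (q_vs - 0)
      have := posPart'_nonneg q_r
      have hq : 0 ≤ (R_d + R_v * 0) / (1 + 0 + posPart' q_c + posPart' q_r) :=
        div_nonneg (by linarith) hden.le
      positivity
    have h2 : c_cd * (0 - q_vs) * posPart' q_c + c_cn * 0 * q_cn ≤ 0 := by
      have := posPart'_nonneg q_c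
      nlinarith [mul_nonneg (mul_nonneg hcd.le hqvs) (posPart'_nonneg q_c)]
    linarith
end

section
/- For x ∈ ℝ set x⁺ := (|x|+x)/2 and x⁻ := (|x|−x)/2. Given positive constants c_ev, c_cd, c_cn, c_ac, c_cr, R_d, R_v, q_cn, q_ac and a real number q_vs, define for T, q_v, q_c, q_r ∈ ℝ: S_cd⁺ := c_cd·(q_v⁺ − q_vs)·q_c⁺ + c_cn·(q_v − q_vs)⁺·q_cn; S_ac⁺ := c_ac·(q_c − q_ac)⁺; S_cr⁺ := c_cr·q_c⁺·q_r⁺. Then (S_cd⁺ − S_ac⁺ − S_cr⁺)·q_c⁻ = c_cn·(q_v − q_vs)⁺·q_cn·q_c⁻ ≥ 0. -/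
/-- Pointwise identity and sign inequality
`(S_cd⁺ − S_ac⁺ − S_cr⁺)·q_c⁻ = c_cn·(q_v − q_vs)⁺·q_cn·q_c⁻ ≥ 0`, used to prove
non-negativity of the cloud water mixing ratio. -/
theorem cloud_source_sign
    (c_ev c_cd c_cn c_ac c_cr R_d R_v q_cn q_ac : ℝ)
    (hev : 0 < c_ev) (hcd : 0 < c_cd) (hcn : 0 < c_cn) (hac : 0 < c_ac)
    (hcr : 0 < c_cr) (hRd : 0 < R_d) (hRv : 0 < R_v) (hqcn : 0 < q_cn)
    (hqac : 0 < q_ac)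
    (q_vs T q_v q_c q_r : ℝ) :
    ((c_cd * (posPart' q_v - q_vs) * posPart' q_c
        + c_cn * posPart' (q_v - q_vs) * q_cn)
      - c_ac * posPart' (q_c - q_ac)
      - c_cr * posPart' q_c * posPart' q_r) * negPart' q_c
      = c_cn * posPart' (q_v - q_vs) * q_cn * negPart' q_c
    ∧ 0 ≤ c_cn * posPart' (q_v - q_vs) * q_cn * negPart' q_c := by
  constructor
  · rcases le_or_gt q_c 0 with h | h
    · rw [posPart'_of_nonpos h, posPart'_of_nonpos (by linarith : q_c - q_ac ≤ 0)]
      ring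
    · rw [negPart'_of_nonneg h.le]; ring
  · exact mul_nonneg (mul_nonneg (mul_nonneg hcn.le (posPart'_nonneg _)) hqcn.le) (negPart'_nonneg _)
end
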